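/- arXiv:1408.3778 — 3 statements merged into one kernel-verified Lean document; each statement's English description precedes it below -/
import Mathlib

section
/- Let P₁, P₂ be rank-one projectors on a finite-dimensional vector space with trace(P₁P₂) ≠ 1, and set Q_i = I - P_i, t = trace(Q₂P₁). Then 𝒫₁ = (Q₂P₁)/t and 𝒫₂ = (Q₁P₂)/t are mutually orthogonal rank-one projectors: 𝒫ᵢ² = 𝒫ᵢ and 𝒫₁𝒫₂ = 𝒫₂𝒫₁ = 0. -/
/-!
An endomorphism `f` of rank at most one satisfies `f ∘ f = (trace f) • f`. Both `Q₂ P₁` and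
`Q₁ P₂` have rank at most one and trace `t`, because `trace P₁ = trace P₂ = 1`; hence dividing
them by `t ≠ 0` gives idempotents, nonzero and hence of rank exactly one. Orthogonality
comes from `P₁ Q₁ = P₂ Q₂ = 0`.
-/

namespace LinearMap

theorem comp_id_sub_comp_eq_zero {R M : Type*} [Ring R] [AddCommGroup M] [Module R M]
    {p : M →ₗ[R] M} (hp : p ∘ₗ p = p) (f g : M →ₗ[R] M) :
    (f ∘ₗ p) ∘ₗ ((id - p) ∘ₗ g) = 0 := by
  rw [comp_assoc, ← comp_assoc g, comp_sub, comp_id, hp, sub_self, zero_comp, comp_zero]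

variable {K V : Type*} [Field K] [AddCommGroup V] [Module K V]

theorem rank_inv_smul_of_rank_le_one {f : V →ₗ[K] V} {t : K} (hf : rank f ≤ 1)
    (ht : trace K V f = t) (htne : t ≠ 0) : rank (t⁻¹ • f) = 1 := by
  have hne : f ≠ 0 := by
    rintro rfl
    exact htne (by simpa using ht.symm)
  rw [rank, range_smul f _ (inv_ne_zero htne)]
  exact le_antisymm hf <| Cardinal.one_le_iff_ne_zero.mpr fun h =>
    hne (range_eq_bot.mp (Submodule.rank_eq_zero.mp h))

variable [FiniteDimensional K V]

theorem eq_trace_smul_id_of_rank_le_one (hV : Module.rank K V ≤ 1) (g : V →ₗ[K] V) :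
    g = trace K V g • id := by
  obtain ⟨v₀, hv₀⟩ := rank_le_one_iff.mp hV
  obtain ⟨c, hc⟩ := hv₀ (g v₀)
  have hg : g = c • id := by
    ext v
    obtain ⟨r, rfl⟩ := hv₀ v
    simp [← hc, smul_comm r c]
  rcases Nat.le_one_iff_eq_zero_or_eq_one.mp (Module.finrank_le_of_rank_le (n := 1) (by simpa))
    with h | h
  · have : Subsingleton V := Module.finrank_zero_iff.mp h
    exact Subsingleton.elim _ _
  · rw [hg, map_smul, trace_id, h]
    simp

/-- Factoring `f` through its range `W` turns `f ∘ f` into `f` composed with an endomorphism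
of `W`, which is a scalar because `dim W ≤ 1`; that scalar is `trace f` by cyclicity. -/
theorem comp_self_eq_trace_smul_of_rank_le_one {f : V →ₗ[K] V} (hf : rank f ≤ 1) :
    f ∘ₗ f = trace K V f • f := by
  set W := range f
  have hfac : W.subtype ∘ₗ f.rangeRestrict = f := rfl
  have hg := eq_trace_smul_id_of_rank_le_one hf (f.rangeRestrict ∘ₗ W.subtype)
  rw [← trace_comp_comm', hfac] at hg
  calc f ∘ₗ f = W.subtype ∘ₗ (f.rangeRestrict ∘ₗ W.subtype) ∘ₗ f.rangeRestrict := rfl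
    _ = trace K V f • f := by rw [hg, smul_comp, comp_smul, id_comp, hfac]

theorem trace_eq_one_of_comp_self_of_rank_eq_one {p : V →ₗ[K] V} (hp : p ∘ₗ p = p)
    (hr : rank p = 1) : trace K V p = 1 := by
  have hne : p ≠ 0 := by
    rintro rfl
    simp [rank] at hr
  have h := comp_self_eq_trace_smul_of_rank_le_one hr.le
  rw [hp] at h
  have : (1 - trace K V p) • p = 0 := by rw [sub_smul, one_smul, ← h, sub_self]
  exact (sub_eq_zero.mp ((smul_eq_zero.mp this).resolve_right hne)).symm

theorem inv_smul_comp_self_of_rank_le_one {f : V →ₗ[K] V} {t : K} (hf : rank f ≤ 1)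
    (ht : trace K V f = t) (htne : t ≠ 0) : (t⁻¹ • f) ∘ₗ (t⁻¹ • f) = t⁻¹ • f := by
  rw [smul_comp, comp_smul, comp_self_eq_trace_smul_of_rank_le_one hf, ht, smul_smul,
    smul_smul, mul_assoc, inv_mul_cancel₀ htne, mul_one]

theorem trace_id_sub_comp_eq_of_trace_eq {f g : V →ₗ[K] V} (h : trace K V f = trace K V g) :
    trace K V ((id - g) ∘ₗ f) = trace K V ((id - f) ∘ₗ g) := by
  simp only [sub_comp, id_comp, map_sub, h, trace_comp_comm' f g]

end LinearMap

open LinearMap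

theorem orthogonal_rank_one_projectors_general {K V : Type*} [Field K] [AddCommGroup V]
    [Module K V] [FiniteDimensional K V] (P₁ P₂ : V →ₗ[K] V)
    (h₁ : P₁ ∘ₗ P₁ = P₁) (h₂ : P₂ ∘ₗ P₂ = P₂)
    (r₁ : LinearMap.rank P₁ = 1) (r₂ : LinearMap.rank P₂ = 1)
    (t : K) (ht : t = LinearMap.trace K V ((LinearMap.id - P₂) ∘ₗ P₁)) (htne : t ≠ 0) :
    let 𝒫₁ : V →ₗ[K] V := t⁻¹ • ((LinearMap.id - P₂) ∘ₗ P₁)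
    let 𝒫₂ : V →ₗ[K] V := t⁻¹ • ((LinearMap.id - P₁) ∘ₗ P₂)
    (𝒫₁ ∘ₗ 𝒫₁ = 𝒫₁) ∧ (𝒫₂ ∘ₗ 𝒫₂ = 𝒫₂) ∧ (LinearMap.rank 𝒫₁ = 1) ∧ (LinearMap.rank 𝒫₂ = 1) ∧
      (𝒫₁ ∘ₗ 𝒫₂ = 0) ∧ (𝒫₂ ∘ₗ 𝒫₁ = 0) := by
  intro 𝒫₁ 𝒫₂
  have hrk₁ : rank ((LinearMap.id - P₂) ∘ₗ P₁) ≤ 1 := r₁ ▸ rank_comp_le_right P₁ _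
  have hrk₂ : rank ((LinearMap.id - P₁) ∘ₗ P₂) ≤ 1 := r₂ ▸ rank_comp_le_right P₂ _
  have ht₁ : trace K V ((LinearMap.id - P₂) ∘ₗ P₁) = t := ht.symm
  have ht₂ : trace K V ((LinearMap.id - P₁) ∘ₗ P₂) = t := by
    rw [ht, trace_id_sub_comp_eq_of_trace_eq]
    rw [trace_eq_one_of_comp_self_of_rank_eq_one h₁ r₁,
      trace_eq_one_of_comp_self_of_rank_eq_one h₂ r₂]
  refine ⟨inv_smul_comp_self_of_rank_le_one hrk₁ ht₁ htne,
    inv_smul_comp_self_of_rank_le_one hrk₂ ht₂ htne, rank_inv_smul_of_rank_le_one hrk₁ ht₁ htne,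
    rank_inv_smul_of_rank_le_one hrk₂ ht₂ htne, ?_, ?_⟩
  · rw [smul_comp, comp_smul, comp_id_sub_comp_eq_zero h₁, smul_zero, smul_zero]
  · rw [smul_comp, comp_smul, comp_id_sub_comp_eq_zero h₂, smul_zero, smul_zero]

/-- For rank-one projectors `P₁`, `P₂` with `t = trace ((I - P₂) ∘ P₁) ≠ 0`,
the maps `𝒫₁ = t⁻¹ • ((I - P₂) ∘ P₁)` and `𝒫₂ = t⁻¹ • ((I - P₁) ∘ P₂)` are
mutually orthogonal rank-one projectors. -/
theorem orthogonal_rank_one_projectors {K V : Type*} [Field K] [CharZero K] [AddCommGroup V]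
    [Module K V] [FiniteDimensional K V] (P₁ P₂ : V →ₗ[K] V)
    (h₁ : P₁ ∘ₗ P₁ = P₁) (h₂ : P₂ ∘ₗ P₂ = P₂)
    (r₁ : LinearMap.rank P₁ = 1) (r₂ : LinearMap.rank P₂ = 1)
    (t : K) (ht : t = LinearMap.trace K V ((LinearMap.id - P₂) ∘ₗ P₁)) (htne : t ≠ 0) :
    let 𝒫₁ : V →ₗ[K] V := t⁻¹ • ((LinearMap.id - P₂) ∘ₗ P₁)
    let 𝒫₂ : V →ₗ[K] V := t⁻¹ • ((LinearMap.id - P₁) ∘ₗ P₂)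
    (𝒫₁ ∘ₗ 𝒫₁ = 𝒫₁) ∧ (𝒫₂ ∘ₗ 𝒫₂ = 𝒫₂) ∧ (LinearMap.rank 𝒫₁ = 1) ∧ (LinearMap.rank 𝒫₂ = 1) ∧
      (𝒫₁ ∘ₗ 𝒫₂ = 0) ∧ (𝒫₂ ∘ₗ 𝒫₁ = 0) :=
  orthogonal_rank_one_projectors_general P₁ P₂ h₁ h₂ r₁ r₂ t ht htne
end

section
/- Under the same hypotheses, the sum 𝒫 = 𝒫₁ + 𝒫₂ = (Q₂P₁ + Q₁P₂)/trace(Q₂P₁) is a projector of rank two. -/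
open LinearMap Module

/-- A rank-one idempotent takes the form `x ↦ f x • v` with `f v = 1`. -/
lemma rank_one_idem_struct {K V : Type*} [Field K] [AddCommGroup V]
    [Module K V] [FiniteDimensional K V] (P : V →ₗ[K] V)
    (hP : P ∘ₗ P = P) (r : LinearMap.rank P = 1) :
    ∃ (f : Module.Dual K V) (v : V), f v = 1 ∧ ∀ x, P x = f x • v := by
  have hfr : finrank K (LinearMap.range P) = 1 := by
    have := r
    rw [LinearMap.rank] at this
    rwa [rank_eq_one_iff_finrank_eq_one] at this
  let b : Basis (Fin 1) K (LinearMap.range P) := finBasisOfFinrankEq K _ hfr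
  set v : V := (b 0 : V) with hv
  set f : Module.Dual K V := (b.coord 0) ∘ₗ P.rangeRestrict with hf
  have key : ∀ x, P x = f x • v := by
    intro x
    have h1 : (P.rangeRestrict x : V) = P x := rfl
    have h2 : P.rangeRestrict x = b.repr (P.rangeRestrict x) 0 • b 0 := by
      conv_lhs => rw [← b.sum_repr (P.rangeRestrict x)]
      simp
    have := congrArg (Submodule.subtype _) h2
    simp only [Submodule.coe_subtype, Submodule.coe_smul] at this
    rw [h1] at this
    simpa [hf, hv] using this
  have hvne : v ≠ 0 := by
    simp only [hv]
    exact fun h => b.ne_zero 0 (Subtype.coe_injective (by simpa using h))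
  have hvr : P v = v := by
    obtain ⟨y, hy⟩ : (b 0 : V) ∈ LinearMap.range P := (b 0).2
    have : P v = P (P y) := by rw [hy]
    rw [← LinearMap.comp_apply, hP, hy] at this
    exact this
  have hfv : f v = 1 := by
    have h3 : f v • v = (1 : K) • v := by
      rw [← key v, hvr, one_smul]
    by_contra hne
    exact hne (smul_left_injective K hvne h3)
  exact ⟨f, v, hfv, key⟩

lemma trace_smul_form {K V : Type*} [Field K] [AddCommGroup V]
    [Module K V] [FiniteDimensional K V] (f : Module.Dual K V) (w : V)
    (A : V →ₗ[K] V) (hA : ∀ x, A x = f x • w) :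
    LinearMap.trace K V A = f w := by
  have hAd : A = dualTensorHom K V V (f ⊗ₜ w) := by
    ext x; simp [hA x]
  rw [hAd, LinearMap.trace_eq_contract_apply, contractLeft_apply]

/-- Sandwich identity for a rank-one idempotent. -/
lemma sandwich {K V : Type*} [Field K] [AddCommGroup V]
    [Module K V] [FiniteDimensional K V] (P : V →ₗ[K] V)
    (hP : P ∘ₗ P = P) (r : LinearMap.rank P = 1) (A : V →ₗ[K] V) :
    P ∘ₗ A ∘ₗ P = (LinearMap.trace K V (A ∘ₗ P)) • P ∧ LinearMap.trace K V P = 1 := by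
  obtain ⟨f, v, hfv, key⟩ := rank_one_idem_struct P hP r
  have htr : ∀ B : V →ₗ[K] V, LinearMap.trace K V (B ∘ₗ P) = f (B v) := by
    intro B
    exact trace_smul_form f (B v) (B ∘ₗ P)
      (fun x => by simp [key x, map_smul])
  constructor
  · ext x
    simp only [LinearMap.comp_apply, LinearMap.smul_apply]
    rw [key x, map_smul, map_smul, key (A v), htr A]
    rw [smul_comm]
  · have := htr LinearMap.id
    simpa [hfv] using this

/-- Under the same hypotheses as for the orthogonal projectors `𝒫₁, 𝒫₂`, their sum
`𝒫 = 𝒫₁ + 𝒫₂ = t⁻¹ • ((I - P₂)∘P₁ + (I - P₁)∘P₂)` is a projector of rank two. -/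
theorem sum_is_rank_two_projector {K V : Type*} [Field K] [CharZero K] [AddCommGroup V]
    [Module K V] [FiniteDimensional K V] (P₁ P₂ : V →ₗ[K] V)
    (h₁ : P₁ ∘ₗ P₁ = P₁) (h₂ : P₂ ∘ₗ P₂ = P₂)
    (r₁ : LinearMap.rank P₁ = 1) (r₂ : LinearMap.rank P₂ = 1)
    (t : K) (ht : t = LinearMap.trace K V ((LinearMap.id - P₂) ∘ₗ P₁)) (htne : t ≠ 0) :
    let 𝒫₀ : V →ₗ[K] V := t⁻¹ • ((LinearMap.id - P₂) ∘ₗ P₁ + (LinearMap.id - P₁) ∘ₗ P₂)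
    (𝒫₀ ∘ₗ 𝒫₀ = 𝒫₀) ∧ LinearMap.rank 𝒫₀ = 2 := by
  intro 𝒫₀
  set s : K := LinearMap.trace K V (P₂ ∘ₗ P₁) with hs
  have tr₁' : LinearMap.trace K V P₁ = 1 := (sandwich P₁ h₁ r₁ 1).2
  have tr₂' : LinearMap.trace K V P₂ = 1 := (sandwich P₂ h₂ r₂ 1).2
  have hts : t = 1 - s := by
    rw [ht, LinearMap.sub_comp, LinearMap.id_comp, map_sub, tr₁', hs]
  have hs' : LinearMap.trace K V (P₁ ∘ₗ P₂) = s := by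
    rw [hs, LinearMap.trace_comp_comm']
  -- key sandwich identities
  have k121 : P₁ ∘ₗ (P₂ ∘ₗ P₁) = s • P₁ := by
    have := (sandwich P₁ h₁ r₁ P₂).1
    rwa [← hs] at this
  have k212 : P₂ ∘ₗ (P₁ ∘ₗ P₂) = s • P₂ := by
    have := (sandwich P₂ h₂ r₂ P₁).1
    rwa [hs'] at this
  set u : V →ₗ[K] V := (LinearMap.id - P₂) ∘ₗ P₁ with hu
  set w : V →ₗ[K] V := (LinearMap.id - P₁) ∘ₗ P₂ with hw
  have hu2 : u ∘ₗ u = t • u := by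
    have hmid : P₁ ∘ₗ ((LinearMap.id - P₂) ∘ₗ P₁) = t • P₁ := by
      rw [LinearMap.sub_comp, LinearMap.id_comp, LinearMap.comp_sub, h₁, k121, hts,
        sub_smul, one_smul]
    calc u ∘ₗ u = (LinearMap.id - P₂) ∘ₗ (P₁ ∘ₗ ((LinearMap.id - P₂) ∘ₗ P₁)) := by
          rw [hu, LinearMap.comp_assoc]
      _ = (LinearMap.id - P₂) ∘ₗ (t • P₁) := by rw [hmid]
      _ = t • u := by rw [LinearMap.comp_smul, hu]
  have hw2 : w ∘ₗ w = t • w := by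
    have hmid : P₂ ∘ₗ ((LinearMap.id - P₁) ∘ₗ P₂) = t • P₂ := by
      rw [LinearMap.sub_comp, LinearMap.id_comp, LinearMap.comp_sub, h₂, k212, hts,
        sub_smul, one_smul]
    calc w ∘ₗ w = (LinearMap.id - P₁) ∘ₗ (P₂ ∘ₗ ((LinearMap.id - P₁) ∘ₗ P₂)) := by
          rw [hw, LinearMap.comp_assoc]
      _ = (LinearMap.id - P₁) ∘ₗ (t • P₂) := by rw [hmid]
      _ = t • w := by rw [LinearMap.comp_smul, hw]
  have hP1Q1 : P₁ ∘ₗ (LinearMap.id - P₁) = 0 := by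
    rw [LinearMap.comp_sub, LinearMap.comp_id, h₁, sub_self]
  have hP2Q2 : P₂ ∘ₗ (LinearMap.id - P₂) = 0 := by
    rw [LinearMap.comp_sub, LinearMap.comp_id, h₂, sub_self]
  have huw : u ∘ₗ w = 0 := by
    calc u ∘ₗ w = (LinearMap.id - P₂) ∘ₗ ((P₁ ∘ₗ (LinearMap.id - P₁)) ∘ₗ P₂) := by
          rw [hu, hw, LinearMap.comp_assoc, LinearMap.comp_assoc]
      _ = 0 := by rw [hP1Q1, LinearMap.zero_comp, LinearMap.comp_zero]
  have hwu : w ∘ₗ u = 0 := by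
    calc w ∘ₗ u = (LinearMap.id - P₁) ∘ₗ ((P₂ ∘ₗ (LinearMap.id - P₂)) ∘ₗ P₁) := by
          rw [hu, hw, LinearMap.comp_assoc, LinearMap.comp_assoc]
      _ = 0 := by rw [hP2Q2, LinearMap.zero_comp, LinearMap.comp_zero]
  have hS : (u + w) ∘ₗ (u + w) = t • (u + w) := by
    rw [LinearMap.add_comp, LinearMap.comp_add, LinearMap.comp_add, hu2, hw2, huw, hwu,
      smul_add]
    abel
  have h𝒫 : 𝒫₀ = t⁻¹ • (u + w) := rfl
  have hidem : 𝒫₀ ∘ₗ 𝒫₀ = 𝒫₀ := by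
    rw [h𝒫, LinearMap.smul_comp, LinearMap.comp_smul, hS, smul_smul, smul_smul,
      mul_assoc, inv_mul_cancel₀ htne, mul_one]
  refine ⟨hidem, ?_⟩
  -- trace computation
  have trU : LinearMap.trace K V u = t := ht.symm
  have trW : LinearMap.trace K V w = t := by
    rw [hw, LinearMap.sub_comp, LinearMap.id_comp, map_sub, tr₂', hs', hts]
  have tr𝒫 : LinearMap.trace K V 𝒫₀ = 2 := by
    rw [h𝒫, map_smul, map_add, trU, trW, smul_eq_mul]
    field_simp
    ring
  -- rank via trace of a projector
  have hproj : LinearMap.IsProj (LinearMap.range 𝒫₀) 𝒫₀ := by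
    refine ⟨fun x => LinearMap.mem_range_self _ x, fun x hx => ?_⟩
    obtain ⟨y, rfl⟩ := hx
    rw [← LinearMap.comp_apply, hidem]
  have htrace := hproj.trace
  rw [tr𝒫] at htrace
  have hfr : finrank K (LinearMap.range 𝒫₀) = 2 := by
    have : ((finrank K (LinearMap.range 𝒫₀) : ℕ) : K) = ((2 : ℕ) : K) := by
      rw [← htrace]; norm_num
    exact_mod_cast this
  rw [LinearMap.rank, ← Module.finrank_eq_rank, hfr]
  norm_num
end

section
/- The linear map φ* on Pic(X) = Z H_f ⊕ Z H_g ⊕ ⊕ᵢ₌₁⁸ Z Eᵢ defined by the assignment in equation (dpa-tr-std) (e.g. H_f ↦ 6H_f+3H_g-2E₁-2E₂-2E₃-2E₄-E₅-E₆-3E₇-3E₈, H_g ↦ 3H_f+H_g-E₁-E₂-E₃-E₄-E₇-E₈, Eᵢ as listed) preserves the intersection form and fixes the anticanonical class -K = 2H_f+2H_g-∑Eᵢ. -/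
namespace DPA2Action

def Hf : Fin 10 → ℤ := Pi.single 0 1
def Hg : Fin 10 → ℤ := Pi.single 1 1
def E (k : Fin 8) : Fin 10 → ℤ := Pi.single k.succ.succ 1

/-- The intersection form: `H_f·H_g = 1`, `Eᵢ² = -1`, all other products of basis classes `0`. -/
def inter (x y : Fin 10 → ℤ) : ℤ :=
  x 0 * y 1 + x 1 * y 0 - ∑ k : Fin 8, x k.succ.succ * y k.succ.succ

/-- The anticanonical class `-K = 2H_f + 2H_g - ∑ᵢ Eᵢ`. -/
def negK : Fin 10 → ℤ := 2 • Hf + 2 • Hg - ∑ k : Fin 8, E k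

/-- Image of `H_f` under `φ*`. -/
def imgHf : Fin 10 → ℤ :=
  6 • Hf + 3 • Hg - 2 • E 0 - 2 • E 1 - 2 • E 2 - 2 • E 3 - E 4 - E 5 - 3 • E 6 - 3 • E 7

/-- Image of `H_g` under `φ*`. -/
def imgHg : Fin 10 → ℤ := 3 • Hf + Hg - E 0 - E 1 - E 2 - E 3 - E 6 - E 7

/-- Images of `E₁, …, E₈` under `φ*`. -/
def imgE : Fin 8 → (Fin 10 → ℤ) :=
  ![2 • Hf + Hg - E 1 - E 2 - E 3 - E 6 - E 7,
    2 • Hf + Hg - E 0 - E 2 - E 3 - E 6 - E 7,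
    2 • Hf + Hg - E 0 - E 1 - E 3 - E 6 - E 7,
    2 • Hf + Hg - E 0 - E 1 - E 2 - E 6 - E 7,
    3 • Hf + Hg - E 0 - E 1 - E 2 - E 3 - E 5 - E 6 - E 7,
    3 • Hf + Hg - E 0 - E 1 - E 2 - E 3 - E 4 - E 6 - E 7,
    Hf - E 7,
    Hf - E 6]

/-- The ℤ-linear map `φ*` determined by the images of the basis classes. -/
def φ (x : Fin 10 → ℤ) : Fin 10 → ℤ :=
  x 0 • imgHf + x 1 • imgHg + ∑ k : Fin 8, x k.succ.succ • imgE k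

def imgs : Fin 10 → (Fin 10 → ℤ) :=
  ![imgHf, imgHg, imgE 0, imgE 1, imgE 2, imgE 3, imgE 4, imgE 5, imgE 6, imgE 7]

lemma inter_add_left (x x' y : Fin 10 → ℤ) :
    inter (x + x') y = inter x y + inter x' y := by
  simp only [inter, Pi.add_apply, add_mul, Finset.sum_add_distrib]
  ring

lemma inter_smul_left (c : ℤ) (x y : Fin 10 → ℤ) :
    inter (c • x) y = c * inter x y := by
  simp only [inter, Pi.smul_apply, smul_eq_mul, mul_sub, mul_add, Finset.mul_sum, mul_assoc]

lemma inter_add_right (x y y' : Fin 10 → ℤ) :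
    inter x (y + y') = inter x y + inter x y' := by
  simp only [inter, Pi.add_apply, mul_add, Finset.sum_add_distrib]
  ring

lemma inter_smul_right (c : ℤ) (x y : Fin 10 → ℤ) :
    inter x (c • y) = c * inter x y := by
  simp only [inter, Pi.smul_apply, smul_eq_mul, mul_sub, mul_add, Finset.mul_sum, mul_assoc, mul_comm, mul_left_comm]

lemma inter_sum_left (s : Finset (Fin 10)) (f : Fin 10 → (Fin 10 → ℤ)) (y : Fin 10 → ℤ) :
    inter (∑ i ∈ s, f i) y = ∑ i ∈ s, inter (f i) y := by
  induction s using Finset.cons_induction with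
  | empty => simp [inter]
  | cons a s ha ih => rw [Finset.sum_cons, Finset.sum_cons, inter_add_left, ih]

lemma inter_sum_right (s : Finset (Fin 10)) (x : Fin 10 → ℤ) (f : Fin 10 → (Fin 10 → ℤ)) :
    inter x (∑ i ∈ s, f i) = ∑ i ∈ s, inter x (f i) := by
  induction s using Finset.cons_induction with
  | empty => simp [inter]
  | cons a s ha ih => rw [Finset.sum_cons, Finset.sum_cons, inter_add_right, ih]

lemma inter_expand (a b : Fin 10 → ℤ) (u v : Fin 10 → (Fin 10 → ℤ)) :
    inter (∑ i, a i • u i) (∑ j, b j • v j)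
      = ∑ i, ∑ j, a i * b j * inter (u i) (v j) := by
  rw [inter_sum_left]
  refine Finset.sum_congr rfl fun i _ => ?_
  rw [inter_smul_left, inter_sum_right, Finset.mul_sum]
  refine Finset.sum_congr rfl fun j _ => ?_
  rw [inter_smul_right]
  ring

set_option maxHeartbeats 1600000 in
lemma phi_eq (x : Fin 10 → ℤ) : φ x = ∑ i, x i • imgs i := by
  simp only [φ, Fin.sum_univ_succ, Fin.sum_univ_zero, add_zero,
    Fin.succ_zero_eq_one, Fin.succ_one_eq_two,
    show Fin.succ (2:Fin 9) = (3:Fin 10) from rfl,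
    show Fin.succ (2:Fin 8) = (3:Fin 9) from rfl,
    show Fin.succ (2:Fin 7) = (3:Fin 8) from rfl,
    show Fin.succ (2:Fin 6) = (3:Fin 7) from rfl,
    show Fin.succ (2:Fin 5) = (3:Fin 6) from rfl,
    show Fin.succ (2:Fin 4) = (3:Fin 5) from rfl,
    show Fin.succ (2:Fin 3) = (3:Fin 4) from rfl,
    show Fin.succ (3:Fin 9) = (4:Fin 10) from rfl,
    show Fin.succ (3:Fin 8) = (4:Fin 9) from rfl,
    show Fin.succ (3:Fin 7) = (4:Fin 8) from rfl,
    show Fin.succ (3:Fin 6) = (4:Fin 7) from rfl,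
    show Fin.succ (3:Fin 5) = (4:Fin 6) from rfl,
    show Fin.succ (3:Fin 4) = (4:Fin 5) from rfl,
    show Fin.succ (4:Fin 9) = (5:Fin 10) from rfl,
    show Fin.succ (4:Fin 8) = (5:Fin 9) from rfl,
    show Fin.succ (4:Fin 7) = (5:Fin 8) from rfl,
    show Fin.succ (4:Fin 6) = (5:Fin 7) from rfl,
    show Fin.succ (4:Fin 5) = (5:Fin 6) from rfl,
    show Fin.succ (5:Fin 9) = (6:Fin 10) from rfl,
    show Fin.succ (5:Fin 8) = (6:Fin 9) from rfl,
    show Fin.succ (5:Fin 7) = (6:Fin 8) from rfl,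
    show Fin.succ (5:Fin 6) = (6:Fin 7) from rfl,
    show Fin.succ (6:Fin 9) = (7:Fin 10) from rfl,
    show Fin.succ (6:Fin 8) = (7:Fin 9) from rfl,
    show Fin.succ (6:Fin 7) = (7:Fin 8) from rfl,
    show Fin.succ (7:Fin 9) = (8:Fin 10) from rfl,
    show Fin.succ (7:Fin 8) = (8:Fin 9) from rfl,
    show Fin.succ (8:Fin 9) = (9:Fin 10) from rfl,
    show imgs 0 = imgHf from rfl,
    show imgs 1 = imgHg from rfl,
    show imgs 2 = imgE 0 from rfl,
    show imgs 3 = imgE 1 from rfl,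
    show imgs 4 = imgE 2 from rfl,
    show imgs 5 = imgE 3 from rfl,
    show imgs 6 = imgE 4 from rfl,
    show imgs 7 = imgE 5 from rfl,
    show imgs 8 = imgE 6 from rfl,
    show imgs 9 = imgE 7 from rfl,
    show ((0:Fin 8).succ.succ) = (2:Fin 10) from rfl,
    show ((1:Fin 8).succ.succ) = (3:Fin 10) from rfl,
    show ((2:Fin 8).succ.succ) = (4:Fin 10) from rfl,
    show ((3:Fin 8).succ.succ) = (5:Fin 10) from rfl,
    show ((4:Fin 8).succ.succ) = (6:Fin 10) from rfl,
    show ((5:Fin 8).succ.succ) = (7:Fin 10) from rfl,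
    show ((6:Fin 8).succ.succ) = (8:Fin 10) from rfl,
    show ((7:Fin 8).succ.succ) = (9:Fin 10) from rfl]
  abel

lemma sum_single (x : Fin 10 → ℤ) : ∑ i, x i • (Pi.single i 1 : Fin 10 → ℤ) = x := by
  funext j
  simp [Finset.sum_apply, Pi.single_apply]

lemma inter_imgs : ∀ i j : Fin 10,
    inter (imgs i) (imgs j) = inter (Pi.single i 1) (Pi.single j 1) := by decide

/-- `φ*` preserves the intersection form and fixes the anticanonical class. -/
theorem phi_preserves_form_and_fixes_negK :
    (∀ x y : Fin 10 → ℤ, inter (φ x) (φ y) = inter x y) ∧ φ negK = negK := by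
  constructor
  · intro x y
    conv_rhs => rw [← sum_single x, ← sum_single y]
    rw [phi_eq x, phi_eq y, inter_expand, inter_expand]
    refine Finset.sum_congr rfl fun i _ => Finset.sum_congr rfl fun j _ => ?_
    rw [inter_imgs]
  · rw [phi_eq]
    decide

end DPA2Action
end
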